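/- (Spivey's Bell number formula.) For all natural numbers n, m: B(n+m) = Σ_{k=0}^{n} Σ_{j=0}^{m} j^{n−k} · C(n,k) · S(m,j) · B(k), where C(n,k) is the ordinary binomial coefficient and 0^0 is interpreted as 1. -/

import Mathlib

/-!
Let `L` be the linear functional on `ℤ[X]` with `L (X ^ k) = B(k)`. The Bell recurrence
`B(n+1) = ∑ C(n,k) B(k)` says `L (X * p) = L (p.comp (X + 1))`. Since the falling factorial
satisfies `(X)_(j+1) = X * (X)_j.comp (X - 1)`, iterating this gives
`L (p * (X)_j) = L (p.comp (X + j))`. Expanding `X ^ m = ∑ S(m,j) (X)_j` then yields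
`B(n+m) = L (X ^ n * X ^ m) = ∑ S(m,j) L ((X + j) ^ n)`, and the binomial theorem evaluates
`L ((X + j) ^ n) = ∑ C(n,k) j^(n-k) B(k)`.
-/

/-- The Stirling numbers of the second kind `S(n,k)`. -/
def stirling2 : ℕ → ℕ → ℕ
  | 0, 0 => 1
  | 0, _ + 1 => 0
  | _ + 1, 0 => 0
  | n + 1, k + 1 =>
    if k + 1 ≤ n + 1 then stirling2 n k + (k + 1) * stirling2 n (k + 1) else 0

/-- The Bell numbers `B(n)`. -/
def bell (n : ℕ) : ℕ := ∑ k ∈ Finset.range (n + 1), stirling2 n k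

open Finset Polynomial

theorem Nat.stirlingSecond_succ_succ_eq_sum_choose_mul (n k : ℕ) :
    stirlingSecond (n + 1) (k + 1) = ∑ i ∈ range (n + 1), n.choose i * stirlingSecond i k := by
  induction n generalizing k with
  | zero => cases k <;> rfl
  | succ n ih =>
    cases k with
    | zero => simp [sum_range_succ', stirlingSecond_one_right]
    | succ k =>
      have pascal := sum_choose_succ_mul (R := ℕ) (fun i _ => stirlingSecond i (k + 1)) n
      simp only [Nat.cast_id] at pascal
      rw [stirlingSecond_succ_succ, ih, ih, pascal]
      simp only [stirlingSecond_succ_succ, mul_sum, ← sum_add_distrib]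
      exact sum_congr rfl fun i _ => by ring

namespace Polynomial

theorem X_pow_eq_sum_stirlingSecond_nsmul_descPochhammer (R : Type*) [CommRing R] (m : ℕ) :
    (X : R[X]) ^ m = ∑ j ∈ range (m + 1), Nat.stirlingSecond m j • descPochhammer R j := by
  induction m with
  | zero => simp
  | succ m ih =>
    set P := descPochhammer R
    have X_mul (j : ℕ) : X * P j = P (j + 1) + j • P j := by
      simp only [P, descPochhammer_succ_right, nsmul_eq_mul]
      ring
    have shift : ∑ j ∈ range (m + 1), (Nat.stirlingSecond m j * j) • P j
        = ∑ j ∈ range (m + 1), ((j + 1) * Nat.stirlingSecond m (j + 1)) • P (j + 1) := by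
      have top := sum_range_succ (fun j => (Nat.stirlingSecond m j * j) • P j) (m + 1)
      have bot := sum_range_succ' (fun j => (Nat.stirlingSecond m j * j) • P j) (m + 1)
      simp only [Nat.stirlingSecond_eq_zero_of_lt (lt_add_one m), mul_zero, zero_mul, zero_smul,
        add_zero] at top bot
      rw [← top, bot]
      simp only [mul_comm]
    rw [sum_range_succ', pow_succ', ih, mul_sum]
    simp only [mul_smul_comm, X_mul, smul_add, smul_smul, Nat.stirlingSecond_succ_succ, add_smul,
      Nat.stirlingSecond_succ_zero, zero_smul, add_zero, sum_add_distrib]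
    rw [shift, add_comm]

theorem apply_mul_descPochhammer_of_apply_X_mul {R M : Type*} [CommRing R] (L : R[X] → M)
    (hL : ∀ p, L (X * p) = L (p.comp (X + 1))) (p : R[X]) (j : ℕ) :
    L (p * descPochhammer R j) = L (p.comp (X + (j : R[X]))) := by
  induction j generalizing p with
  | zero => simp
  | succ j ih =>
    calc L (p * descPochhammer R (j + 1))
        = L (X * (p * (descPochhammer R j).comp (X - 1))) := by
          rw [descPochhammer_succ_left, mul_left_comm]
      _ = L (p.comp (X + 1) * descPochhammer R j) := by
          rw [hL, mul_comp, comp_assoc]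
          simp
      _ = L (p.comp (X + ((j + 1 : ℕ) : R[X]))) := by
          rw [ih, comp_assoc]
          congr 2
          simp only [add_comp, X_comp, one_comp, Nat.cast_succ]
          ring

end Polynomial

theorem stirling2_eq_stirlingSecond (n k : ℕ) : stirling2 n k = Nat.stirlingSecond n k := by
  induction n generalizing k with
  | zero => cases k <;> rfl
  | succ n ih =>
    cases k with
    | zero => rfl
    | succ k =>
      by_cases hk : k ≤ n
      · simp [stirling2, hk, ih, Nat.stirlingSecond_succ_succ, add_comm]
      · simp [stirling2, hk, Nat.stirlingSecond_eq_zero_of_lt (by omega : n + 1 < k + 1)]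

theorem bell_eq_sum_stirlingSecond_of_le {n N : ℕ} (h : n ≤ N) :
    bell n = ∑ k ∈ range (N + 1), Nat.stirlingSecond n k := by
  simp only [bell, stirling2_eq_stirlingSecond]
  refine sum_subset (range_subset_range.2 (by omega)) fun k _ hk => ?_
  exact Nat.stirlingSecond_eq_zero_of_lt (by simpa using hk)

theorem bell_succ (n : ℕ) : bell (n + 1) = ∑ i ∈ range (n + 1), n.choose i * bell i := by
  rw [bell_eq_sum_stirlingSecond_of_le le_rfl, sum_range_succ']
  simp only [Nat.stirlingSecond_succ_zero, add_zero, Nat.stirlingSecond_succ_succ_eq_sum_choose_mul]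
  rw [sum_comm]
  refine sum_congr rfl fun i hi => ?_
  rw [← mul_sum, ← bell_eq_sum_stirlingSecond_of_le (Nat.lt_succ_iff.1 (mem_range.1 hi))]

def bellFunctional : ℤ[X] →ₗ[ℤ] ℤ := lsum fun k => (bell k : ℤ) • LinearMap.id

theorem bellFunctional_C_mul_X_pow (a : ℤ) (k : ℕ) :
    bellFunctional (C a * X ^ k) = a * bell k := by
  rw [C_mul_X_pow_eq_monomial]
  simp [bellFunctional, lsum_apply, sum_monomial_index, mul_comm]

theorem bellFunctional_X_add_natCast_pow (j n : ℕ) :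
    bellFunctional ((X + (j : ℤ[X])) ^ n) =
      ∑ k ∈ range (n + 1), (n.choose k * j ^ (n - k) * bell k : ℤ) := by
  rw [add_pow, map_sum bellFunctional]
  refine Finset.sum_congr rfl fun k _ => ?_
  rw [← bellFunctional_C_mul_X_pow]
  congr 1
  simp only [← C_eq_natCast, ← C_pow, C_mul]
  ring

theorem bellFunctional_X_mul (p : ℤ[X]) :
    bellFunctional (X * p) = bellFunctional (p.comp (X + 1)) := by
  induction p using Polynomial.induction_on' with
  | add p q hp hq => simp only [mul_add, add_comp, map_add, hp, hq]
  | monomial n a =>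
    have h := bellFunctional_X_add_natCast_pow 1 n
    simp only [Nat.cast_one, one_pow, mul_one] at h
    rw [← C_mul_X_pow_eq_monomial, mul_left_comm, ← pow_succ', bellFunctional_C_mul_X_pow,
      mul_comp, C_comp, X_pow_comp, C_mul', map_smul, h, bell_succ, smul_eq_mul]
    norm_cast

/-- Spivey's Bell number formula. -/
theorem spivey_bell_formula (n m : ℕ) :
    bell (n + m)
    = ∑ k ∈ Finset.range (n + 1), ∑ j ∈ Finset.range (m + 1),
        j ^ (n - k) * n.choose k * stirling2 m j * bell k := by
  have umbral : (bell (n + m) : ℤ) = ∑ j ∈ range (m + 1), Nat.stirlingSecond m j *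
      ∑ k ∈ range (n + 1), (n.choose k * j ^ (n - k) * bell k : ℤ) := by
    calc (bell (n + m) : ℤ) = bellFunctional (X ^ n * X ^ m) := by
          rw [← pow_add, ← one_mul (X ^ _), ← C_1, bellFunctional_C_mul_X_pow, one_mul]
      _ = ∑ j ∈ range (m + 1),
            Nat.stirlingSecond m j • bellFunctional ((X + (j : ℤ[X])) ^ n) := by
          rw [X_pow_eq_sum_stirlingSecond_nsmul_descPochhammer ℤ m, mul_sum, map_sum]
          refine sum_congr rfl fun j _ => ?_
          rw [mul_smul_comm, map_nsmul,
            apply_mul_descPochhammer_of_apply_X_mul _ bellFunctional_X_mul, X_pow_comp]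
      _ = _ := by simp only [bellFunctional_X_add_natCast_pow, nsmul_eq_mul]
  apply Nat.cast_injective (R := ℤ)
  push_cast
  rw [umbral, sum_comm]
  refine sum_congr rfl fun j _ => ?_
  rw [mul_sum]
  refine sum_congr rfl fun k _ => ?_
  rw [stirling2_eq_stirlingSecond]
  ring
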